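/- For 0 < z < 1/2, the limit of Z̃_n(z) · (z(1-z))^n as n → ∞ equals (1-2z)/(1-z); i.e. Z̃_n(z) ~ ((1-2z)/(1-z)) · (z(1-z))^{-n}. -/

import Mathlib

/-!
Writing `D = z(1 - z)`, the ballot recurrence `B_{n+1,q+1} = B_{n,q} + B_{n+1,q+2}` gives
`Z̃_{n+1}(z) D = Z̃_n(z) - z C_n` with `C_n` the Catalan numbers, hence
`Z̃_n(z) Dⁿ = 1 - z ∑_{k<n} C_k D^k`. Since `D < 1/4` the series converges to the Catalan
generating function `(1 - √(1 - 4D)) / (2D) = 1 / (1 - z)`, the square root being `1 - 2z`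
because `z < 1/2`.
-/

open Filter

/-- Ballot number B_{m,q}, with B_{0,0} = 1 and B_{m,q} = 0 for q > m. -/
noncomputable def Bq (m q : ℕ) : ℝ :=
  if m = 0 then (if q = 0 then 1 else 0)
  else if q ≤ m then
    (q : ℝ) * (2 * m - q - 1).factorial / ((m.factorial : ℝ) * (m - q).factorial)
  else 0

/-- One-sided contact generating function Z̃_m(z) = ∑_q B_{m,q} z^{-q}. -/
noncomputable def Zt (m : ℕ) (z : ℝ) : ℝ := ∑ q ∈ Finset.range (m + 1), Bq m q * z⁻¹ ^ q

open Finset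

lemma Bq_of_lt {m q : ℕ} (h : m < q) : Bq m q = 0 := by
  unfold Bq
  split_ifs <;> first | rfl | omega

lemma Bq_of_ne_zero {m q : ℕ} (hm : m ≠ 0) (hq : q ≤ m) :
    Bq m q = q * (2 * m - q - 1).factorial / ((m.factorial : ℝ) * (m - q).factorial) := by
  rw [Bq, if_neg hm, if_pos hq]

lemma Bq_succ_zero (n : ℕ) : Bq (n + 1) 0 = 0 := by
  simp [Bq]

lemma Bq_self (m : ℕ) : Bq m m = 1 := by
  rcases m with _ | n
  · simp [Bq]
  · rw [Bq_of_ne_zero n.succ_ne_zero le_rfl, show 2 * (n + 1) - (n + 1) - 1 = n by omega,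
      Nat.sub_self, Nat.factorial_succ, Nat.factorial_zero]
    push_cast
    field_simp

lemma Bq_succ_one (n : ℕ) : Bq (n + 1) 1 = catalan n := by
  have hcat : (catalan n : ℝ) = (2 * n).factorial / (n.factorial * n.factorial * (n + 1)) := by
    have h := congrArg (Nat.cast : ℕ → ℝ) (succ_mul_catalan_eq_centralBinom n)
    rw [Nat.centralBinom, Nat.cast_choose ℝ (by omega : n ≤ 2 * n),
      show 2 * n - n = n by omega] at h
    push_cast at h
    field_simp at h ⊢
    linear_combination h
  rw [Bq_of_ne_zero (by omega : n + 1 ≠ 0) (by omega), show 2 * (n + 1) - 1 - 1 = 2 * n by omega,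
    Nat.add_sub_cancel, Nat.factorial_succ, hcat]
  push_cast
  ring

lemma Bq_succ_succ (n q : ℕ) : Bq (n + 1) (q + 1) = Bq n q + Bq (n + 1) (q + 2) := by
  rcases lt_trichotomy q n with hlt | rfl | hgt
  · obtain ⟨b, rfl⟩ : ∃ b, n = q + b + 1 := ⟨n - q - 1, by omega⟩
    rw [Bq_of_ne_zero (by omega) (by omega), Bq_of_ne_zero (by omega) (by omega),
      Bq_of_ne_zero (by omega) (by omega),
      show 2 * (q + b + 1 + 1) - (q + 1) - 1 = (q + 2 * b + 1) + 1 by omega,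
      show q + b + 1 + 1 - (q + 1) = b + 1 by omega,
      show 2 * (q + b + 1 + 1) - (q + 2) - 1 = q + 2 * b + 1 by omega,
      show q + b + 1 + 1 - (q + 2) = b by omega,
      show 2 * (q + b + 1) - q - 1 = q + 2 * b + 1 by omega,
      show q + b + 1 - q = b + 1 by omega,
      Nat.factorial_succ (q + 2 * b + 1), Nat.factorial_succ (q + b + 1), Nat.factorial_succ b]
    push_cast
    field_simp
    ring
  · rw [Bq_self, Bq_self, Bq_of_lt (by omega), add_zero]
  · rw [Bq_of_lt (by omega), Bq_of_lt hgt, Bq_of_lt (by omega), add_zero]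

lemma Zt_succ_mul (n : ℕ) {z : ℝ} (hz : z ≠ 0) :
    Zt (n + 1) z * (z * (1 - z)) = Zt n z - z * catalan n := by
  set w := z⁻¹
  have hzw : z * w = 1 := mul_inv_cancel₀ hz
  set A := ∑ q ∈ range (n + 1), Bq (n + 1) (q + 1) * w ^ q with hA
  set R := ∑ q ∈ range n, Bq (n + 1) (q + 2) * w ^ q with hR
  have hZ : Zt (n + 1) z = w * A := by
    rw [Zt, sum_range_succ', Bq_succ_zero, mul_sum]
    simp only [pow_succ, zero_mul, add_zero]
    exact sum_congr rfl fun q _ => by ring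
  have hA_low : A = Zt n z + R := by
    rw [hA, sum_congr rfl fun q _ => by rw [Bq_succ_succ, add_mul], sum_add_distrib,
      sum_range_succ (fun q => Bq (n + 1) (q + 2) * w ^ q) n, Bq_of_lt (by omega : n + 1 < n + 2),
      zero_mul, add_zero, Zt]
  have hA_high : A = catalan n + w * R := by
    rw [hA, sum_range_succ', Bq_succ_one, hR, mul_sum]
    simp only [pow_zero, mul_one]
    rw [add_comm]
    exact congrArg _ (sum_congr rfl fun q _ => by ring)
  linear_combination (z * (1 - z)) * hZ + (A * (1 - z) - R) * hzw + hA_low - z * hA_high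

lemma Zt_mul_pow (n : ℕ) {z : ℝ} (hz : z ≠ 0) :
    Zt n z * (z * (1 - z)) ^ n = 1 - z * ∑ k ∈ range n, (catalan k : ℝ) * (z * (1 - z)) ^ k := by
  induction n with
  | zero => simp [Zt, Bq]
  | succ n ih =>
    rw [pow_succ', ← mul_assoc, Zt_succ_mul n hz, sub_mul, ih, sum_range_succ]
    ring

noncomputable def catalanSum (x : ℝ) : ℝ := ∑' k, (catalan k : ℝ) * x ^ k

lemma catalan_le_four_pow (k : ℕ) : (catalan k : ℝ) ≤ 4 ^ k := by
  have h : catalan k ≤ 4 ^ k :=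
    calc catalan k ≤ (k + 1) * catalan k := Nat.le_mul_of_pos_left _ k.succ_pos
      _ = k.centralBinom := succ_mul_catalan_eq_centralBinom k
      _ ≤ 4 ^ k := Nat.centralBinom_le_four_pow k
  exact_mod_cast h

lemma summable_norm_catalan_mul_pow {x : ℝ} (hx : |x| < 1 / 4) :
    Summable fun k => ‖(catalan k : ℝ) * x ^ k‖ := by
  refine .of_nonneg_of_le (fun k => norm_nonneg _) (fun k => ?_)
    (summable_geometric_of_lt_one (r := 4 * |x|) (by positivity) (by linarith))
  rw [norm_mul, norm_pow, Real.norm_natCast, Real.norm_eq_abs, mul_pow]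
  exact mul_le_mul_of_nonneg_right (catalan_le_four_pow k) (by positivity)

lemma hasSum_catalanSum {x : ℝ} (hx : |x| < 1 / 4) :
    HasSum (fun k => (catalan k : ℝ) * x ^ k) (catalanSum x) :=
  (summable_norm_catalan_mul_pow hx).of_norm.hasSum

/-- The functional equation `x C(x)² = C(x) - 1` is Segner's recurrence for the Cauchy square. -/
lemma mul_catalanSum_sq {x : ℝ} (hx : |x| < 1 / 4) :
    x * catalanSum x ^ 2 = catalanSum x - 1 := by
  set f : ℕ → ℝ := fun k => (catalan k : ℝ) * x ^ k with hf
  have hnorm := summable_norm_catalan_mul_pow hx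
  have hsq : catalanSum x ^ 2 = ∑' n, (catalan (n + 1) : ℝ) * x ^ n := by
    rw [sq, catalanSum, tsum_mul_tsum_eq_tsum_sum_antidiagonal_of_summable_norm hnorm hnorm]
    refine tsum_congr fun n => ?_
    rw [catalan_succ', Nat.cast_sum, sum_mul]
    refine sum_congr rfl fun kl hkl => ?_
    rw [← HasAntidiagonal.mem_antidiagonal.mp hkl, pow_add]
    push_cast
    ring
  have hshift : catalanSum x = 1 + ∑' n, f (n + 1) := by
    rw [catalanSum, hnorm.of_norm.tsum_eq_zero_add]
    simp [hf]
  rw [hsq, hshift, ← tsum_mul_left, add_sub_cancel_left]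
  exact tsum_congr fun n => by simp only [hf, pow_succ]; ring

lemma catalanSum_nonneg {x : ℝ} (hx : 0 ≤ x) : 0 ≤ catalanSum x :=
  tsum_nonneg fun k => by positivity

lemma catalanSum_le_catalanSum {x y : ℝ} (hx : 0 ≤ x) (hxy : x ≤ y) (hy : y < 1 / 4) :
    catalanSum x ≤ catalanSum y := by
  refine hasSum_le (fun k => ?_) (hasSum_catalanSum ?_) (hasSum_catalanSum ?_)
  · exact mul_le_mul_of_nonneg_left (pow_le_pow_left₀ hx hxy k) (by positivity)
  · rw [abs_of_nonneg hx]; linarith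
  · rw [abs_of_nonneg (by linarith)]; exact hy

/-- Of the two roots of the functional equation, monotonicity in `x` selects the minus sign. -/
lemma one_sub_two_mul_catalanSum {x : ℝ} (hx : 0 ≤ x) (hx4 : x < 1 / 4) :
    1 - 2 * x * catalanSum x = √(1 - 4 * x) := by
  have habs : ∀ y, 0 ≤ y → y < 1 / 4 → |1 - 2 * y * catalanSum y| = √(1 - 4 * y) := by
    intro y hy hy4
    rw [← Real.sqrt_sq_eq_abs]
    congr 1
    linear_combination 4 * y * mul_catalanSum_sq (x := y) (by rw [abs_of_nonneg hy]; exact hy4)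
  suffices hnonneg : 0 ≤ 1 - 2 * x * catalanSum x by
    rw [← habs x hx hx4, abs_of_nonneg hnonneg]
  by_contra! hneg
  set y := (x + 1 / 4) / 2
  have hxy : x < y := by simp only [y]; linarith
  have hy4 : y < 1 / 4 := by simp only [y]; linarith
  have hle : catalanSum x ≤ catalanSum y := catalanSum_le_catalanSum hx hxy.le hy4
  have hmono : 1 - 2 * y * catalanSum y ≤ 1 - 2 * x * catalanSum x := by
    nlinarith [catalanSum_nonneg hx]
  have hsqrt : √(1 - 4 * y) < √(1 - 4 * x) := Real.sqrt_lt_sqrt (by linarith) (by linarith)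
  rw [← habs x hx hx4, ← habs y (by linarith) hy4, abs_of_neg hneg,
    abs_of_neg (hmono.trans_lt hneg)] at hsqrt
  linarith

lemma catalanSum_mul_one_sub {z : ℝ} (hz0 : 0 < z) (hz : z < 1 / 2) :
    catalanSum (z * (1 - z)) * (1 - z) = 1 := by
  have h := one_sub_two_mul_catalanSum (x := z * (1 - z)) (by nlinarith) (by nlinarith)
  rw [show 1 - 4 * (z * (1 - z)) = (1 - 2 * z) ^ 2 by ring, Real.sqrt_sq (by linarith)] at h
  have : z * (catalanSum (z * (1 - z)) * (1 - z) - 1) = 0 := by linear_combination -h / 2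
  simpa [hz0.ne', sub_eq_zero] using this

/-- For 0 < z < 1/2, Z̃ₙ(z) ~ ((1-2z)/(1-z)) (z(1-z))^{-n}. -/
theorem one_sided_asymptotics_low (z : ℝ) (hz0 : 0 < z) (hz : z < 1 / 2) :
    Tendsto (fun n : ℕ => Zt n z * (z * (1 - z)) ^ n) atTop
      (nhds ((1 - 2 * z) / (1 - z))) := by
  have hD : |z * (1 - z)| < 1 / 4 := by rw [abs_of_nonneg (by nlinarith)]; nlinarith
  have hpartial := (hasSum_catalanSum hD).tendsto_sum_nat
  have hlimit : (1 - 2 * z) / (1 - z) = 1 - z * catalanSum (z * (1 - z)) := by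
    have := catalanSum_mul_one_sub hz0 hz
    field_simp [(by linarith : 1 - z ≠ 0)]
    linear_combination z * this
  simp_rw [Zt_mul_pow _ hz0.ne', hlimit]
  exact (hpartial.const_mul z).const_sub 1
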